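/- arXiv:2206.06997 — 4 statements merged into one kernel-verified Lean document; each statement's English description precedes it below -/
import Mathlib

section
/- Let τ > 0, m₁ > 0, m₂ ∈ ℝ, T_off > 0, T_on^min > 0, I_max ≥ 0, A_ub ≥ 0, ω_l ≥ 0. Set d = exp(−T_on^min/τ) and b = exp(−(T_on^min + T_off)/τ). Let g : ℝ → ℝ be differentiable with |g′(t)| ≤ A_ub/τ for all t ≥ 0 and |g(0)| ≤ A_ub/√(1 + ω_l²τ²). If (A_ub/τ)·(1 + d/√(1 + ω_l²τ²)) + (b/τ)·I_max < m₁·(1 − d), then for every i_p ≥ m₂·T_off and every i_c with 0 ≤ i_c ≤ I_max, the filtered current-sense signal v(t) = (i_p − m₂T_off)(1 − e^{−t/τ}) + i_c·e^{−T_off/τ}·e^{−t/τ} + m₁(t + (e^{−t/τ} − 1)τ) + g(t) − g(0)·e^{−t/τ} has strictly positive derivative at every t ≥ T_on^min; in particular v is strictly increasing on [T_on^min, ∞). -/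
open Real Set

/-!
Differentiating the filtered signal gives
`v'(t) = (a - c + g 0) e^{-t/τ} / τ + m₁ (1 - e^{-t/τ}) + g'(t)` with `a = i_p - m₂ T_off ≥ 0`
and `c = i_c e^{-T_off/τ}`. For `t ≥ T_on_min` we have `e^{-t/τ} ≤ d` and `c e^{-t/τ} ≤ b I_max`,
so every term is bounded below by the corresponding term of the hypothesis on `A_ub`, `b`, `d`,
which makes `v'` positive; monotonicity then follows from the mean value theorem.
-/

/-- `a` is the pre-charge `i_p - m₂ T_off` and `c` the decayed valley current `i_c e^{-T_off/τ}`. -/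
noncomputable def filteredSenseSignal (τ m₁ a c : ℝ) (g : ℝ → ℝ) (t : ℝ) : ℝ :=
  a * (1 - exp (-(t / τ))) + c * exp (-(t / τ)) + m₁ * (t + (exp (-(t / τ)) - 1) * τ)
    + g t - g 0 * exp (-(t / τ))

lemma hasDerivAt_exp_neg_div (τ t : ℝ) :
    HasDerivAt (fun t => exp (-(t / τ))) (-exp (-(t / τ)) / τ) t :=
  ((hasDerivAt_id' t).div_const τ).fun_neg.exp.congr_deriv (by ring)

lemma hasDerivAt_filteredSenseSignal {τ : ℝ} (hτ : τ ≠ 0) (m₁ a c : ℝ) {g : ℝ → ℝ} {t : ℝ}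
    (hg : DifferentiableAt ℝ g t) :
    HasDerivAt (filteredSenseSignal τ m₁ a c g)
      ((a - c + g 0) / τ * exp (-(t / τ)) + m₁ * (1 - exp (-(t / τ))) + deriv g t) t := by
  have hE := hasDerivAt_exp_neg_div τ t
  have h := (((((hasDerivAt_const t 1).fun_sub hE).const_mul a).fun_add (hE.const_mul c)).fun_add
    (((hasDerivAt_id' t).fun_add ((hE.sub_const 1).mul_const τ)).const_mul m₁)).fun_add
    hg.hasDerivAt |>.fun_sub (hE.const_mul (g 0))
  refine h.congr_deriv ?_
  field_simp
  ring

lemma filteredSenseSignal_deriv_pos {τ m₁ a c A s d β E g₀ g₁ : ℝ} (hτ : 0 < τ) (hm₁ : 0 ≤ m₁)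
    (ha : 0 ≤ a) (hA : 0 ≤ A) (hs : 0 < s) (hE : 0 ≤ E) (hEd : E ≤ d) (hcE : c * E ≤ β)
    (hg₀ : |g₀| ≤ A / s) (hg₁ : |g₁| ≤ A / τ) (hcond : A / τ * (1 + d / s) + β / τ < m₁ * (1 - d)) :
    0 < (a - c + g₀) / τ * E + m₁ * (1 - E) + g₁ := by
  have hg₀E : -(A / s) * d ≤ g₀ * E :=
    calc -(A / s) * d ≤ -(A / s) * E :=
          mul_le_mul_of_nonpos_left hEd (neg_nonpos.2 (by positivity))
      _ ≤ g₀ * E := mul_le_mul_of_nonneg_right (neg_le_of_abs_le hg₀) hE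
  have hsum : -β - A / s * d ≤ (a - c + g₀) * E := by nlinarith [mul_nonneg ha hE]
  have hfirst : -((β + A / s * d) / τ) ≤ (a - c + g₀) / τ * E := by
    rw [← neg_div, div_mul_eq_mul_div (a - c + g₀)]
    exact div_le_div_of_nonneg_right (by linarith) hτ.le
  have hm₁E : m₁ * (1 - d) ≤ m₁ * (1 - E) := mul_le_mul_of_nonneg_left (by linarith) hm₁
  have hcond' : A / τ * (1 + d / s) + β / τ = A / τ + (β + A / s * d) / τ := by
    field_simp
    ring
  linarith [neg_le_of_abs_le hg₁]

theorem stmt_0_general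
    (τ m₁ m₂ T_off T_on_min I_max A_ub ω_l : ℝ)
    (hτ : 0 < τ) (hm₁ : 0 < m₁) (hTon : 0 < T_on_min)
    (hA : 0 ≤ A_ub)
    (d b : ℝ)
    (hd : d = Real.exp (-(T_on_min / τ)))
    (hb : b = Real.exp (-((T_on_min + T_off) / τ)))
    (g : ℝ → ℝ) (hg : Differentiable ℝ g)
    (hg' : ∀ t ≥ (0:ℝ), |deriv g t| ≤ A_ub / τ)
    (hg0 : |g 0| ≤ A_ub / Real.sqrt (1 + ω_l ^ 2 * τ ^ 2))
    (hcond : A_ub / τ * (1 + d / Real.sqrt (1 + ω_l ^ 2 * τ ^ 2)) + b / τ * I_max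
        < m₁ * (1 - d)) :
    ∀ i_p ≥ m₂ * T_off, ∀ i_c, 0 ≤ i_c → i_c ≤ I_max →
      (∀ t ≥ T_on_min,
        0 < deriv (fun t : ℝ =>
          (i_p - m₂ * T_off) * (1 - Real.exp (-(t / τ)))
          + i_c * Real.exp (-(T_off / τ)) * Real.exp (-(t / τ))
          + m₁ * (t + (Real.exp (-(t / τ)) - 1) * τ)
          + g t - g 0 * Real.exp (-(t / τ))) t)
      ∧ StrictMonoOn (fun t : ℝ =>
          (i_p - m₂ * T_off) * (1 - Real.exp (-(t / τ)))
          + i_c * Real.exp (-(T_off / τ)) * Real.exp (-(t / τ))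
          + m₁ * (t + (Real.exp (-(t / τ)) - 1) * τ)
          + g t - g 0 * Real.exp (-(t / τ))) (Set.Ici T_on_min) := by
  intro i_p hip i_c hic₀ hic
  set v := filteredSenseSignal τ m₁ (i_p - m₂ * T_off) (i_c * exp (-(T_off / τ))) g
  have hv : ∀ t, HasDerivAt v _ t := fun t =>
    hasDerivAt_filteredSenseSignal hτ.ne' m₁ _ _ (hg t)
  have hpos : ∀ t ≥ T_on_min, 0 < deriv v t := by
    intro t ht
    have hdecay : ∀ {x y}, x ≤ y → exp (-(y / τ)) ≤ exp (-(x / τ)) := fun hxy =>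
      exp_le_exp.2 (neg_le_neg (div_le_div_of_nonneg_right hxy hτ.le))
    have hcE : i_c * exp (-(T_off / τ)) * exp (-(t / τ)) ≤ b * I_max :=
      calc i_c * exp (-(T_off / τ)) * exp (-(t / τ)) = i_c * exp (-((t + T_off) / τ)) := by
            rw [mul_assoc, ← exp_add, add_div, neg_add, add_comm]
        _ ≤ I_max * b := mul_le_mul hic (hb ▸ hdecay (by linarith)) (exp_pos _).le
            (by linarith)
        _ = b * I_max := mul_comm _ _
    rw [(hv t).deriv]
    refine filteredSenseSignal_deriv_pos hτ hm₁.le (by linarith) hA (by positivity) (exp_pos _).le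
      (hd ▸ hdecay ht) hcE hg0 (hg' t (by linarith)) ?_
    rwa [← div_mul_eq_mul_div]
  refine ⟨hpos, strictMonoOn_of_deriv_pos (convex_Ici _)
    (HasDerivAt.continuousOn fun t _ => hv t) fun t ht => hpos t ?_⟩
  exact (interior_subset ht : t ∈ Ici T_on_min)

theorem stmt_0
    (τ m₁ m₂ T_off T_on_min I_max A_ub ω_l : ℝ)
    (hτ : 0 < τ) (hm₁ : 0 < m₁) (hToff : 0 < T_off) (hTon : 0 < T_on_min)
    (hImax : 0 ≤ I_max) (hA : 0 ≤ A_ub) (hωl : 0 ≤ ω_l)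
    (d b : ℝ)
    (hd : d = Real.exp (-(T_on_min / τ)))
    (hb : b = Real.exp (-((T_on_min + T_off) / τ)))
    (g : ℝ → ℝ) (hg : Differentiable ℝ g)
    (hg' : ∀ t ≥ (0:ℝ), |deriv g t| ≤ A_ub / τ)
    (hg0 : |g 0| ≤ A_ub / Real.sqrt (1 + ω_l ^ 2 * τ ^ 2))
    (hcond : A_ub / τ * (1 + d / Real.sqrt (1 + ω_l ^ 2 * τ ^ 2)) + b / τ * I_max
        < m₁ * (1 - d)) :
    ∀ i_p ≥ m₂ * T_off, ∀ i_c, 0 ≤ i_c → i_c ≤ I_max →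
      (∀ t ≥ T_on_min,
        0 < deriv (fun t : ℝ =>
          (i_p - m₂ * T_off) * (1 - Real.exp (-(t / τ)))
          + i_c * Real.exp (-(T_off / τ)) * Real.exp (-(t / τ))
          + m₁ * (t + (Real.exp (-(t / τ)) - 1) * τ)
          + g t - g 0 * Real.exp (-(t / τ))) t)
      ∧ StrictMonoOn (fun t : ℝ =>
          (i_p - m₂ * T_off) * (1 - Real.exp (-(t / τ)))
          + i_c * Real.exp (-(T_off / τ)) * Real.exp (-(t / τ))
          + m₁ * (t + (Real.exp (-(t / τ)) - 1) * τ)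
          + g t - g 0 * Real.exp (-(t / τ))) (Set.Ici T_on_min) :=
  stmt_0_general τ m₁ m₂ T_off T_on_min I_max A_ub ω_l hτ hm₁ hTon hA d b hd hb g hg hg' hg0 hcond
end

section
/- Let τ > 0, ω_l ≥ 0, and let W : ℝ → ℂ be integrable with ∫_ℝ |W(ω)| dω ≤ A_ub and W(ω) = 0 for all ω with |ω| < ω_l (the interference is bandwidth-limited from below by ω_l). Then the function g(t) = ∫_ℝ W(ω)·e^{iωt}/(1 + iωτ) dω satisfies |g(t)| ≤ A_ub/√(1 + ω_l²τ²) for every t ∈ ℝ. -/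
/-!
The transfer function has modulus `|1 + iωτ|⁻¹ = (1 + ω²τ²)^(-1/2)`, which decreases in `|ω|`,
so on the support of `W` it is at most `(1 + ω_l²τ²)^(-1/2)`; since `|e^{iωt}| = 1`, the triangle
inequality for integrals bounds `|g(t)|` by that gain times `∫ |W|`.
-/

open MeasureTheory Complex

theorem norm_one_add_I_mul_ofReal (x : ℝ) : ‖1 + I * x‖ = √(1 + x ^ 2) := by
  rw [norm_def, normSq_apply]
  simp [sq]

theorem sqrt_one_add_sq_mul_le_norm_one_add_I_mul {ω_l ω : ℝ} (hωl : 0 ≤ ω_l) (hω : ω_l ≤ |ω|)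
    (τ : ℝ) : √(1 + ω_l ^ 2 * τ ^ 2) ≤ ‖1 + I * ω * τ‖ := by
  have hsq : ω_l ^ 2 ≤ ω ^ 2 := by simpa only [sq_abs] using pow_le_pow_left₀ hωl hω 2
  rw [mul_assoc, ← ofReal_mul, norm_one_add_I_mul_ofReal, mul_pow]
  gcongr

theorem norm_integral_mul_le_of_norm_le_on_support {W K : ℝ → ℂ} {C : ℝ} (hW : Integrable W)
    (hK : ∀ ω, W ω ≠ 0 → ‖K ω‖ ≤ C) :
    ‖∫ ω, W ω * K ω‖ ≤ (∫ ω, ‖W ω‖) * C := by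
  have hpointwise : ∀ ω, ‖W ω * K ω‖ ≤ ‖W ω‖ * C := fun ω => by
    by_cases h0 : W ω = 0
    · simp [h0]
    · rw [norm_mul]
      exact mul_le_mul_of_nonneg_left (hK ω h0) (norm_nonneg _)
  calc ‖∫ ω, W ω * K ω‖ ≤ ∫ ω, ‖W ω‖ * C :=
        norm_integral_le_of_norm_le (hW.norm.mul_const C) (.of_forall hpointwise)
    _ = (∫ ω, ‖W ω‖) * C := integral_mul_const C _

theorem stmt_3_general
    (τ ω_l A_ub : ℝ) (hωl : 0 ≤ ω_l)
    (W : ℝ → ℂ)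
    (hW : Integrable W)
    (hA : (∫ ω : ℝ, ‖W ω‖) ≤ A_ub)
    (hband : ∀ ω : ℝ, |ω| < ω_l → W ω = 0) :
    ∀ t : ℝ,
      ‖∫ ω : ℝ, W ω * Complex.exp (Complex.I * ω * t) / (1 + Complex.I * ω * τ)‖
        ≤ A_ub / Real.sqrt (1 + ω_l ^ 2 * τ ^ 2) := by
  intro t
  have hc : 0 < √(1 + ω_l ^ 2 * τ ^ 2) := Real.sqrt_pos.mpr (by positivity)
  have hgain : ∀ ω, W ω ≠ 0 →
      ‖exp (I * ω * t) / (1 + I * ω * τ)‖ ≤ (√(1 + ω_l ^ 2 * τ ^ 2))⁻¹ := fun ω hW0 => by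
    have hω : ω_l ≤ |ω| := not_lt.mp fun h => hW0 (hband ω h)
    rw [norm_div, mul_assoc, ← ofReal_mul, norm_exp_I_mul_ofReal, one_div]
    exact inv_anti₀ hc (sqrt_one_add_sq_mul_le_norm_one_add_I_mul hωl hω τ)
  simp_rw [mul_div_assoc]
  calc _ ≤ (∫ ω, ‖W ω‖) * (√(1 + ω_l ^ 2 * τ ^ 2))⁻¹ :=
        norm_integral_mul_le_of_norm_le_on_support hW hgain
    _ ≤ A_ub / √(1 + ω_l ^ 2 * τ ^ 2) := by
        rw [← div_eq_mul_inv]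
        exact div_le_div_of_nonneg_right hA hc.le

theorem stmt_3
    (τ ω_l A_ub : ℝ) (hτ : 0 < τ) (hωl : 0 ≤ ω_l)
    (W : ℝ → ℂ)
    (hW : Integrable W)
    (hA : (∫ ω : ℝ, ‖W ω‖) ≤ A_ub)
    (hband : ∀ ω : ℝ, |ω| < ω_l → W ω = 0) :
    ∀ t : ℝ,
      ‖∫ ω : ℝ, W ω * Complex.exp (Complex.I * ω * t) / (1 + Complex.I * ω * τ)‖
        ≤ A_ub / Real.sqrt (1 + ω_l ^ 2 * τ ^ 2) :=
  stmt_3_general τ ω_l A_ub hωl W hW hA hband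
end

section
/- Let ρ ∈ [0, 1) and let a : ℕ → ℝ satisfy |a(n)| ≤ ρ for all n. Let u : ℕ → ℝ be square-summable, and define x : ℕ → ℝ by x(0) = u(0) and x(n+1) = a(n+1)·x(n) + u(n+1). Then x is square-summable and (∑_{n} x(n)²)^{1/2} ≤ (1/(1 − ρ))·(∑_{n} u(n)²)^{1/2}. -/
/-!
Convexity of the square gives `(ρ a + b)² ≤ ρ a² + b² / (1 - ρ)`, so the energy `e n = x n ²`
obeys `e (n+1) ≤ ρ e n + u (n+1)² / (1 - ρ)`. Summing this one-step estimate telescopes to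
`(1 - ρ) ∑ e ≤ ∑ u² / (1 - ρ)`, which is the squared ℓ² bound.
-/

open Finset

lemma sq_mul_add_le {ρ : ℝ} (hρ0 : 0 ≤ ρ) (hρ1 : ρ < 1) (a b : ℝ) :
    (ρ * a + b) ^ 2 ≤ ρ * a ^ 2 + b ^ 2 / (1 - ρ) := by
  have h1ρ : 0 < 1 - ρ := by linarith
  rw [← sub_nonneg]
  have gap : ρ * a ^ 2 + b ^ 2 / (1 - ρ) - (ρ * a + b) ^ 2
      = ρ * ((1 - ρ) * a - b) ^ 2 / (1 - ρ) := by
    field_simp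
    ring
  rw [gap]
  positivity

section Energy

variable {ρ : ℝ} {e f : ℕ → ℝ}

lemma one_sub_mul_sum_range_le (hρ0 : 0 ≤ ρ) (he : ∀ n, 0 ≤ e n) (h0 : e 0 ≤ f 0)
    (hstep : ∀ n, e (n + 1) ≤ ρ * e n + f (n + 1)) (N : ℕ) :
    (1 - ρ) * ∑ n ∈ range N, e n ≤ ∑ n ∈ range N, f n := by
  -- The extra `ρ * e N` is what the next step `e (N + 1) ≤ ρ * e N + f (N + 1)` consumes.
  have invariant : ∀ N, (1 - ρ) * ∑ n ∈ range (N + 1), e n + ρ * e N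
      ≤ ∑ n ∈ range (N + 1), f n := by
    intro N
    induction N with
    | zero => simp only [zero_add, range_one, sum_singleton]; linarith
    | succ N ih =>
      rw [sum_range_succ e, sum_range_succ f]
      linarith [hstep N]
  cases N with
  | zero => simp
  | succ N => linarith [invariant N, mul_nonneg hρ0 (he N)]

lemma summable_and_tsum_le_of_le_mul_add (hρ0 : 0 ≤ ρ) (hρ1 : ρ < 1) (he : ∀ n, 0 ≤ e n)
    (hf0 : ∀ n, 0 ≤ f n) (hf : Summable f) (h0 : e 0 ≤ f 0) (hstep : ∀ n, e (n + 1) ≤ ρ * e n + f (n + 1)) :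
    Summable e ∧ ∑' n, e n ≤ (∑' n, f n) / (1 - ρ) := by
  have h1ρ : 0 < 1 - ρ := by linarith
  have partial_le : ∀ N, ∑ n ∈ range N, e n ≤ (∑' n, f n) / (1 - ρ) := by
    intro N
    rw [le_div_iff₀' h1ρ]
    exact (one_sub_mul_sum_range_le hρ0 he h0 hstep N).trans
      (hf.sum_le_tsum _ fun n _ => hf0 n)
  exact ⟨summable_of_sum_range_le he partial_le, Real.tsum_le_of_sum_range_le he partial_le⟩

end Energy

theorem stmt_14
    (ρ : ℝ) (hρ0 : 0 ≤ ρ) (hρ1 : ρ < 1)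
    (a : ℕ → ℝ) (ha : ∀ n, |a n| ≤ ρ)
    (u : ℕ → ℝ) (hu : Summable (fun n => u n ^ 2))
    (x : ℕ → ℝ) (hx0 : x 0 = u 0)
    (hx : ∀ n : ℕ, x (n + 1) = a (n + 1) * x n + u (n + 1)) :
    Summable (fun n => x n ^ 2) ∧
    Real.sqrt (∑' n, x n ^ 2) ≤ 1 / (1 - ρ) * Real.sqrt (∑' n, u n ^ 2) := by
  have h1ρ : 0 < 1 - ρ := by linarith
  have h0 : x 0 ^ 2 ≤ u 0 ^ 2 / (1 - ρ) := by
    rw [hx0, le_div_iff₀ h1ρ]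
    nlinarith [sq_nonneg (u 0)]
  have hstep : ∀ n, x (n + 1) ^ 2 ≤ ρ * x n ^ 2 + u (n + 1) ^ 2 / (1 - ρ) := by
    intro n
    have hxn : |x (n + 1)| ≤ ρ * |x n| + |u (n + 1)| := by
      rw [hx n]
      calc |a (n + 1) * x n + u (n + 1)| ≤ |a (n + 1)| * |x n| + |u (n + 1)| := by
            rw [← abs_mul]; exact abs_add_le _ _
        _ ≤ ρ * |x n| + |u (n + 1)| := by gcongr; exact ha _
    calc x (n + 1) ^ 2 = |x (n + 1)| ^ 2 := (sq_abs _).symm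
      _ ≤ (ρ * |x n| + |u (n + 1)|) ^ 2 := by gcongr
      _ ≤ ρ * x n ^ 2 + u (n + 1) ^ 2 / (1 - ρ) := by
        simpa only [sq_abs] using sq_mul_add_le hρ0 hρ1 |x n| |u (n + 1)|
  obtain ⟨hsum, hle⟩ := summable_and_tsum_le_of_le_mul_add hρ0 hρ1 (fun n => sq_nonneg (x n))
    (fun n => by positivity) (hu.div_const _) h0 hstep
  refine ⟨hsum, ?_⟩
  have hle' : ∑' n, x n ^ 2 ≤ (1 / (1 - ρ)) ^ 2 * ∑' n, u n ^ 2 := by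
    rw [tsum_div_const] at hle
    calc ∑' n, x n ^ 2 ≤ (∑' n, u n ^ 2) / (1 - ρ) / (1 - ρ) := hle
      _ = (1 / (1 - ρ)) ^ 2 * ∑' n, u n ^ 2 := by ring
  calc Real.sqrt (∑' n, x n ^ 2) ≤ Real.sqrt ((1 / (1 - ρ)) ^ 2 * ∑' n, u n ^ 2) :=
        Real.sqrt_le_sqrt hle'
    _ = 1 / (1 - ρ) * Real.sqrt (∑' n, u n ^ 2) := by
        rw [Real.sqrt_mul (sq_nonneg _), Real.sqrt_sq (by positivity)]
end

section
/- Let τ > 0, T_on > 0, T_off > 0, and let I_c, I_p, m₂ be real numbers. Let w : ℝ → ℝ be continuous and bounded, define g(t) = ∫_{−∞}^{t} w(s)·(1/τ)e^{−(t−s)/τ} ds and y(t) = ∫_0^t w(s)·(1/τ)e^{−(t−s)/τ} ds, and define ξ(t̃) = (I_c·e^{−T_off/τ} − (I_p − m₂T_off))·(e^{−(T_on+t̃)/τ} − e^{−T_on/τ}) + y(T_on + t̃) − y(T_on) for t̃ > −T_on. Then ξ is differentiable and for every t̃ > −T_on, writing s = T_on + t̃: ξ′(t̃) = ψ₁(s)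 + ψ₂(s), where ψ₁(s) = g′(s) + (e^{−s/τ}/τ)·g(0) and ψ₂(s) = ((I_p − m₂T_off)/τ)·e^{−s/τ} − (I_c/τ)·e^{−(s+T_off)/τ}. -/
/-!
Writing the kernel as `(1/τ) e^{-(t-s)/τ} = (e^{-t/τ}/τ) e^{s/τ}`, both the forced response
`g` and the zero-state response `y` are `e^{-t/τ}/τ` times an integral of `w(s) e^{s/τ}`.
Splitting `(-∞, t] = (-∞, 0] ∪ (0, t]` gives `g(t) = e^{-t/τ} g(0) + y(t)`, and the
fundamental theorem of calculus shows that both solve the filter equation `τ x' = w - x`.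
Hence `ψ₁(s) = (w(s) - y(s))/τ = y'(s)`, while `ψ₂` is the derivative of the exponential
term of `ξ`.
-/

open MeasureTheory

open Real Set

section LowPassFilter

variable {τ : ℝ} {w : ℝ → ℝ}

theorem one_div_mul_exp_neg_sub_div (t s : ℝ) :
    1 / τ * exp (-((t - s) / τ)) = exp (-(t / τ)) / τ * exp (s / τ) := by
  rw [show -((t - s) / τ) = -(t / τ) + s / τ by ring, exp_add]
  ring

theorem integrableOn_Iic_mul_exp_div (hτ : 0 < τ) (hw : AEStronglyMeasurable w) {C : ℝ}
    (hC : ∀ s, |w s| ≤ C) (t : ℝ) :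
    IntegrableOn (fun s => w s * exp (s / τ)) (Iic t) := by
  have hexp : IntegrableOn (fun s => exp (s / τ)) (Iic t) := by
    simpa only [div_eq_inv_mul] using integrableOn_exp_mul_Iic (inv_pos.2 hτ) t
  exact hexp.bdd_mul hw.restrict (Filter.Eventually.of_forall hC)

theorem setIntegral_Iic_lowPass_eq_mul (t : ℝ) :
    ∫ s in Iic t, w s * (1 / τ * exp (-((t - s) / τ)))
      = exp (-(t / τ)) / τ * ∫ s in Iic t, w s * exp (s / τ) := by
  simp_rw [one_div_mul_exp_neg_sub_div, mul_left_comm (w _)]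
  exact integral_const_mul _ _

theorem intervalIntegral_lowPass_eq_mul (a t : ℝ) :
    ∫ s in a..t, w s * (1 / τ * exp (-((t - s) / τ)))
      = exp (-(t / τ)) / τ * ∫ s in a..t, w s * exp (s / τ) := by
  simp_rw [one_div_mul_exp_neg_sub_div, mul_left_comm (w _)]
  exact intervalIntegral.integral_const_mul _ _

theorem setIntegral_Iic_lowPass_eq_add (hτ : 0 < τ) (hw : AEStronglyMeasurable w) {C : ℝ}
    (hC : ∀ s, |w s| ≤ C) (a t : ℝ) :
    ∫ s in Iic t, w s * (1 / τ * exp (-((t - s) / τ)))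
      = exp (-((t - a) / τ)) * (∫ s in Iic a, w s * (1 / τ * exp (-((a - s) / τ))))
        + ∫ s in a..t, w s * (1 / τ * exp (-((t - s) / τ))) := by
  have hsplit := intervalIntegral.integral_Iic_sub_Iic
    (integrableOn_Iic_mul_exp_div hτ hw hC a) (integrableOn_Iic_mul_exp_div hτ hw hC t)
  have hexp : exp (-((t - a) / τ)) * exp (-(a / τ)) = exp (-(t / τ)) := by
    rw [← exp_add]
    ring_nf
  rw [setIntegral_Iic_lowPass_eq_mul, setIntegral_Iic_lowPass_eq_mul,
    intervalIntegral_lowPass_eq_mul, ← hsplit, ← hexp]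
  ring

theorem hasDerivAt_intervalIntegral_lowPass (hw : Continuous w) (a t : ℝ) :
    HasDerivAt (fun t => ∫ s in a..t, w s * (1 / τ * exp (-((t - s) / τ))))
      ((w t - ∫ s in a..t, w s * (1 / τ * exp (-((t - s) / τ)))) / τ) t := by
  have hφ : Continuous fun s => w s * exp (s / τ) := by fun_prop
  have hF : HasDerivAt (fun t => ∫ s in a..t, w s * exp (s / τ)) (w t * exp (t / τ)) t :=
    intervalIntegral.integral_hasDerivAt_right (hφ.intervalIntegrable a t)
      hφ.stronglyMeasurable.stronglyMeasurableAtFilter hφ.continuousAt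
  have hE : HasDerivAt (fun t => exp (-(t / τ)) / τ) (exp (-(t / τ)) * -(1 / τ) / τ) t :=
    (((hasDerivAt_id t).div_const τ).neg.exp).div_const τ
  simp_rw [intervalIntegral_lowPass_eq_mul]
  refine (hE.mul hF).congr_deriv ?_
  have hexp : exp (-(t / τ)) * exp (t / τ) = 1 := by rw [← exp_add, neg_add_cancel, exp_zero]
  linear_combination (w t / τ) * hexp

theorem hasDerivAt_setIntegral_Iic_lowPass (hτ : 0 < τ) (hw : Continuous w) {C : ℝ}
    (hC : ∀ s, |w s| ≤ C) (t : ℝ) :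
    HasDerivAt (fun t => ∫ s in Iic t, w s * (1 / τ * exp (-((t - s) / τ))))
      ((w t - ∫ s in Iic t, w s * (1 / τ * exp (-((t - s) / τ)))) / τ) t := by
  have hdecomp (u : ℝ) := setIntegral_Iic_lowPass_eq_add hτ hw.aestronglyMeasurable hC 0 u
  simp only [sub_zero] at hdecomp
  have hE : HasDerivAt (fun t => exp (-(t / τ))) (exp (-(t / τ)) * -(1 / τ)) t :=
    ((hasDerivAt_id t).div_const τ).neg.exp
  refine (((hE.mul_const _).add (hasDerivAt_intervalIntegral_lowPass hw 0 t)).congr_of_eventuallyEq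
    (.of_forall hdecomp)).congr_deriv ?_
  rw [hdecomp t]
  ring

end LowPassFilter

theorem stmt_15_general
    (τ T_on T_off : ℝ) (hτ : 0 < τ)
    (I_c I_p m₂ : ℝ)
    (w : ℝ → ℝ) (hcont : Continuous w) (C : ℝ) (hbdd : ∀ s, |w s| ≤ C)
    (g y ξ : ℝ → ℝ)
    (hg : ∀ t : ℝ, g t = ∫ s in Set.Iic t, w s * (1 / τ * Real.exp (-((t - s) / τ))))
    (hy : ∀ t : ℝ, y t = ∫ s in (0:ℝ)..t, w s * (1 / τ * Real.exp (-((t - s) / τ))))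
    (hξ : ∀ t' : ℝ, ξ t' =
      (I_c * Real.exp (-(T_off / τ)) - (I_p - m₂ * T_off))
        * (Real.exp (-((T_on + t') / τ)) - Real.exp (-(T_on / τ)))
      + y (T_on + t') - y T_on) :
    ∀ t' : ℝ, -T_on < t' →
      HasDerivAt ξ
        ((deriv g (T_on + t') + Real.exp (-((T_on + t') / τ)) / τ * g 0)
         + ((I_p - m₂ * T_off) / τ * Real.exp (-((T_on + t') / τ))
            - I_c / τ * Real.exp (-((T_on + t' + T_off) / τ)))) t' := by
  intro t' _
  have hy' (t : ℝ) : HasDerivAt y ((w t - y t) / τ) t := by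
    rw [show y = _ from funext hy]
    exact hasDerivAt_intervalIntegral_lowPass hcont 0 t
  have hg' (t : ℝ) : deriv g t = (w t - g t) / τ := by
    rw [show g = _ from funext hg]
    exact (hasDerivAt_setIntegral_Iic_lowPass hτ hcont hbdd t).deriv
  have hgy (t : ℝ) : g t = exp (-(t / τ)) * g 0 + y t := by
    rw [hg t, hg 0, hy t]
    simpa only [sub_zero] using
      setIntegral_Iic_lowPass_eq_add hτ hcont.aestronglyMeasurable hbdd 0 t
  have hE : HasDerivAt (fun u => exp (-((T_on + u) / τ)))
      (exp (-((T_on + t') / τ)) * -(1 / τ)) t' :=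
    (((hasDerivAt_id t').const_add T_on).div_const τ).neg.exp
  rw [show ξ = _ from funext hξ]
  refine ((((hE.sub_const _).const_mul _).add ((hy' _).comp_const_add T_on t')).sub_const
    _).congr_deriv ?_
  rw [hg', hgy, show -((T_on + t' + T_off) / τ) = -((T_on + t') / τ) + -(T_off / τ) by ring,
    exp_add]
  ring

theorem stmt_15
    (τ T_on T_off : ℝ) (hτ : 0 < τ) (hTon : 0 < T_on) (hToff : 0 < T_off)
    (I_c I_p m₂ : ℝ)
    (w : ℝ → ℝ) (hcont : Continuous w) (C : ℝ) (hbdd : ∀ s, |w s| ≤ C)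
    (g y ξ : ℝ → ℝ)
    (hg : ∀ t : ℝ, g t = ∫ s in Set.Iic t, w s * (1 / τ * Real.exp (-((t - s) / τ))))
    (hy : ∀ t : ℝ, y t = ∫ s in (0:ℝ)..t, w s * (1 / τ * Real.exp (-((t - s) / τ))))
    (hξ : ∀ t' : ℝ, ξ t' =
      (I_c * Real.exp (-(T_off / τ)) - (I_p - m₂ * T_off))
        * (Real.exp (-((T_on + t') / τ)) - Real.exp (-(T_on / τ)))
      + y (T_on + t') - y T_on) :
    ∀ t' : ℝ, -T_on < t' →
      HasDerivAt ξ
        ((deriv g (T_on + t') + Real.exp (-((T_on + t') / τ)) / τ * g 0)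
         + ((I_p - m₂ * T_off) / τ * Real.exp (-((T_on + t') / τ))
            - I_c / τ * Real.exp (-((T_on + t' + T_off) / τ)))) t' :=
  stmt_15_general τ T_on T_off hτ I_c I_p m₂ w hcont C hbdd g y ξ hg hy hξ
end
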